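/- Let {P_n(x)} be a sequence of polynomials with nonnegative coefficients and deg P_n = deg P_{n−1} + 1, satisfying P_n(x) = (a_n x + b_n) P_{n−1}(x) + x(c_n x + d_n) P'_{n−1}(x) with a_n, b_n ∈ ℝ, c_n ≤ 0, d_n ≥ 0, and P_0 real-rooted. Then every P_n has only real zeros and P_{n−1} ⪯ P_n for all n (the sequence is a generalized Sturm sequence). -/

import Mathlib

open Polynomial Finset

/-- A real polynomial has only real zeros (all its zeros are real):
the number of real roots (with multiplicity) equals the degree. -/
def RealRooted (f : Polynomial ℝ) : Prop := f.roots.card = f.natDegree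

/-- A real polynomial is standard if it is zero or has positive leading coefficient. -/
def Standard (f : Polynomial ℝ) : Prop := f = 0 ∨ 0 < f.leadingCoeff

/-- `g` alternates left of `f`: both have the same degree `n`, both are real-rooted,
and with zeros listed in nonincreasing order `r 0 ≥ r 1 ≥ …` (for `f`) and
`s 0 ≥ s 1 ≥ …` (for `g`) we have `s n ≤ r n ≤ s (n-1) ≤ … ≤ s 0 ≤ r 0`. -/
def AltLeft (g f : Polynomial ℝ) : Prop :=
  ∃ n : ℕ, ∃ r s : Fin n → ℝ,
    f = Polynomial.C f.leadingCoeff * ∏ i, (Polynomial.X - Polynomial.C (r i)) ∧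
    g = Polynomial.C g.leadingCoeff * ∏ i, (Polynomial.X - Polynomial.C (s i)) ∧
    (∀ i : Fin n, s i ≤ r i) ∧
    (∀ (i : ℕ) (h : i + 1 < n), r ⟨i + 1, h⟩ ≤ s ⟨i, Nat.lt_of_succ_lt h⟩)

/-- `g` interlaces `f`: `deg f = deg g + 1` and the zeros weakly interleave. -/
def Interlaces (g f : Polynomial ℝ) : Prop :=
  ∃ n : ℕ, ∃ r : Fin (n + 1) → ℝ, ∃ s : Fin n → ℝ,
    f = Polynomial.C f.leadingCoeff * ∏ i, (Polynomial.X - Polynomial.C (r i)) ∧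
    g = Polynomial.C g.leadingCoeff * ∏ i, (Polynomial.X - Polynomial.C (s i)) ∧
    ∀ i : Fin n, r i.succ ≤ s i ∧ s i ≤ r i.castSucc

/-- `g ⪯ f` : `g` alternates left of `f` or `g` interlaces `f`. -/
def Prec (g f : Polynomial ℝ) : Prop := AltLeft g f ∨ Interlaces g f

/-- strict alternation -/
def StrictAltLeft (g f : Polynomial ℝ) : Prop :=
  ∃ n : ℕ, ∃ r s : Fin n → ℝ,
    f = Polynomial.C f.leadingCoeff * ∏ i, (Polynomial.X - Polynomial.C (r i)) ∧
    g = Polynomial.C g.leadingCoeff * ∏ i, (Polynomial.X - Polynomial.C (s i)) ∧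
    (∀ i : Fin n, s i < r i) ∧
    (∀ (i : ℕ) (h : i + 1 < n), r ⟨i + 1, h⟩ < s ⟨i, Nat.lt_of_succ_lt h⟩)

/-- strict interlacing -/
def StrictInterlaces (g f : Polynomial ℝ) : Prop :=
  ∃ n : ℕ, ∃ r : Fin (n + 1) → ℝ, ∃ s : Fin n → ℝ,
    f = Polynomial.C f.leadingCoeff * ∏ i, (Polynomial.X - Polynomial.C (r i)) ∧
    g = Polynomial.C g.leadingCoeff * ∏ i, (Polynomial.X - Polynomial.C (s i)) ∧
    ∀ i : Fin n, r i.succ < s i ∧ s i < r i.castSucc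

/-- `g ≺ f` : strict alternation or strict interlacing. -/
def SPrec (g f : Polynomial ℝ) : Prop := StrictAltLeft g f ∨ StrictInterlaces g f

/-- PF: nonnegative coefficients and only real zeros. -/
def PFpoly (f : Polynomial ℝ) : Prop := (∀ i, 0 ≤ f.coeff i) ∧ RealRooted f

/-!
All zeros of `f = P (n - 1)` are `≤ 0` because its coefficients are nonnegative. If
`f = (X - v) ^ (m + 1) * h` with `h v ≠ 0`, the recurrence gives `g = P n = (X - v) ^ m * q` with
`q v = (m + 1) * v * (c * v + d) * h v`, so `q v * h v ≤ 0`. This local sign condition alone forces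
`g`, of degree `deg f + 1` with positive leading coefficient, to have real zeros weakly interlacing
those of the real-rooted `f`: strip the largest zero `t` of `f` together with a zero `ρ ≥ t` of `g`
(either `t` itself, or, when `g t < 0`, a zero beyond `t` from the intermediate value theorem),
check that the sign condition survives, and induct.
-/

/-- `Interleaved t u` means `u₀ ≥ t₀ ≥ u₁ ≥ t₁ ≥ ⋯ ≥ tₙ₋₁ ≥ uₙ`. -/
inductive Interleaved {α : Type*} [LinearOrder α] : List α → List α → Prop
  | single (x : α) : Interleaved [] [x]
  | cons {t : List α} {u : List α} {x y z : α} :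
      x ≤ y → z ≤ x → Interleaved t (z :: u) → Interleaved (x :: t) (y :: z :: u)

namespace Interleaved

variable {α : Type*} [LinearOrder α] {t u l : List α} {x y : α}

theorem length_eq (h : Interleaved t u) : u.length = t.length + 1 := by
  induction h <;> simp_all

theorem le_head (h : Interleaved t (x :: l)) : ∀ z ∈ l, z ≤ x := by
  generalize hu : x :: l = u at h
  induction h generalizing x l with
  | single => cases hu; simp
  | cons hxy hzx _ ih =>
    cases hu
    simp only [List.mem_cons, forall_eq_or_imp]
    exact ⟨hzx.trans hxy, fun w hw => (ih rfl w hw).trans (hzx.trans hxy)⟩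

theorem tail_le (h : Interleaved t u) (ht : ∀ z ∈ t, z ≤ y) : ∀ z ∈ u.tail, z ≤ y := by
  cases h with
  | single => simp
  | cons _ hzx h =>
    have hx := ht _ List.mem_cons_self
    simp only [List.tail_cons, List.mem_cons, forall_eq_or_imp]
    exact ⟨hzx.trans hx, fun w hw => (h.le_head w hw).trans (hzx.trans hx)⟩

theorem replace_head (h : Interleaved t (x :: l)) (ht : ∀ z ∈ t, z ≤ y) :
    Interleaved t (y :: l) := by
  cases h with
  | single => exact single y
  | cons _ hzx h => exact cons (ht _ List.mem_cons_self) hzx h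

theorem exists_perm_cons {ρ : α} (h : Interleaved t u) (ht : ∀ z ∈ t, z ≤ x) (hxρ : x ≤ ρ)
    (hhead : ρ = x ∨ ∀ z ∈ u.head?, z ≤ x) : ∃ w, w.Perm (ρ :: u) ∧ Interleaved (x :: t) w := by
  obtain ⟨z, l, rfl⟩ := List.exists_cons_of_length_eq_add_one h.length_eq
  by_cases hzx : z ≤ x
  · exact ⟨ρ :: z :: l, .refl _, cons hxρ hzx h⟩
  · obtain rfl : ρ = x := hhead.resolve_right (by simpa using hzx)
    exact ⟨z :: ρ :: l, .swap .., cons (le_of_not_ge hzx) le_rfl (h.replace_head ht)⟩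

theorem getD_le (h : Interleaved t u) (d : α) {i : ℕ} (hi : i < t.length) :
    u.getD (i + 1) d ≤ t.getD i d ∧ t.getD i d ≤ u.getD i d := by
  induction h generalizing i with
  | single => simp at hi
  | cons hxy hzx _ ih =>
    cases i with
    | zero => exact ⟨hzx, hxy⟩
    | succ i => exact ih (by simpa using hi)

end Interleaved

namespace Polynomial

variable {R : Type*}

theorem eval_pos_of_coeff_nonneg [CommSemiring R] [PartialOrder R] [IsStrictOrderedRing R]
    {p : R[X]} (hp : ∀ i, 0 ≤ p.coeff i) (hp0 : p ≠ 0) {x : R} (hx : 0 < x) :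
    0 < p.eval x := by
  rw [eval_eq_sum_range]
  calc 0 < p.leadingCoeff * x ^ p.natDegree :=
        mul_pos ((hp _).lt_of_ne' (leadingCoeff_ne_zero.2 hp0)) (pow_pos hx _)
    _ ≤ ∑ i ∈ Finset.range (p.natDegree + 1), p.coeff i * x ^ i :=
        Finset.single_le_sum (fun i _ => mul_nonneg (hp i) (pow_pos hx i).le)
          (Finset.self_mem_range_succ _)

theorem nonpos_of_isRoot_of_coeff_nonneg [CommSemiring R] [LinearOrder R] [IsStrictOrderedRing R]
    {p : R[X]} (hp : ∀ i, 0 ≤ p.coeff i) (hp0 : p ≠ 0) {x : R} (hx : p.IsRoot x) : x ≤ 0 :=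
  le_of_not_gt fun hpos => (eval_pos_of_coeff_nonneg hp hp0 hpos).ne' hx

theorem isRoot_prod_map_X_sub_C_iff [CommRing R] [IsDomain R] {t : List R} {v : R} :
    (t.map (X - C ·)).prod.IsRoot v ↔ v ∈ t := by
  simp [IsRoot, eval_list_prod, List.prod_eq_zero_iff, sub_eq_zero]

theorem eval_prod_map_X_sub_C_nonneg [CommRing R] [PartialOrder R] [IsOrderedRing R]
    {t : List R} {x : R} (ht : ∀ z ∈ t, z ≤ x) : 0 ≤ (t.map (X - C ·)).prod.eval x := by
  rw [eval_list_prod]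
  refine List.prod_nonneg fun y hy => ?_
  simp only [List.map_map, List.mem_map, Function.comp_apply, eval_sub, eval_X, eval_C] at hy
  obtain ⟨z, hz, rfl⟩ := hy
  exact sub_nonneg.2 (ht z hz)

theorem exists_eq_pow_succ_mul_of_isRoot [CommRing R] {p : R[X]} (hp : p ≠ 0)
    {v : R} (hv : p.IsRoot v) : ∃ m h, p = (X - C v) ^ (m + 1) * h ∧ h.eval v ≠ 0 := by
  obtain ⟨h, hph, hdvd⟩ := exists_eq_pow_rootMultiplicity_mul_and_not_dvd p hp v
  obtain ⟨m, hm⟩ := Nat.exists_eq_add_of_lt (rootMultiplicity_pos hp |>.2 hv)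
  exact ⟨m, h, by rwa [hm, zero_add] at hph, fun h0 => hdvd (dvd_iff_isRoot.2 h0)⟩

end Polynomial

def OppositeSignsAtRoots (f g : ℝ[X]) : Prop :=
  ∀ (v : ℝ) (m : ℕ) (h : ℝ[X]), f = (X - C v) ^ (m + 1) * h → h.eval v ≠ 0 →
    ∃ q, g = (X - C v) ^ m * q ∧ q.eval v * h.eval v ≤ 0

namespace OppositeSignsAtRoots

variable {f g : ℝ[X]}

theorem of_C_mul {L : ℝ} (hL : 0 < L) (hfg : OppositeSignsAtRoots (C L * f) g) :
    OppositeSignsAtRoots f g := by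
  intro v m h hf hv
  obtain ⟨q, hq, hsign⟩ := hfg v m (C L * h) (by rw [hf]; ring) (by simp [hL.ne', hv])
  refine ⟨q, hq, nonpos_of_mul_nonpos_left ?_ hL⟩
  simp only [eval_mul, eval_C] at hsign
  linear_combination hsign

theorem of_X_sub_C_mul {t ρ : ℝ} (hfg : OppositeSignsAtRoots ((X - C t) * f) ((X - C ρ) * g))
    (hroots : ∀ v, f.IsRoot v → v ≤ t) (htρ : t ≤ ρ) (hρ : f.IsRoot t → ρ = t) :
    OppositeSignsAtRoots f g := by
  intro v m h hf hv
  have hroot : f.IsRoot v := by simp [hf]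
  rcases (hroots v hroot).eq_or_lt with hvt | hvt
  · subst hvt
    obtain rfl := hρ hroot
    obtain ⟨q, hq, hsign⟩ := hfg _ (m + 1) h (by rw [hf]; ring) hv
    exact ⟨q, mul_left_cancel₀ (X_sub_C_ne_zero _) (by rw [hq]; ring), hsign⟩
  · have hvρ : v < ρ := hvt.trans_le htρ
    obtain ⟨q, hq, hsign⟩ := hfg v m ((X - C t) * h) (by rw [hf]; ring)
      (by simpa [sub_eq_zero, hvt.ne] using hv)
    have hqρ : q.IsRoot ρ := by
      have := congrArg (eval ρ) hq
      simp only [eval_mul, eval_pow, eval_sub, eval_X, eval_C, sub_self, zero_mul] at this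
      exact (mul_eq_zero.1 this.symm).resolve_left (pow_ne_zero _ (sub_ne_zero.2 hvρ.ne'))
    obtain ⟨q', rfl⟩ := dvd_iff_isRoot.2 hqρ
    refine ⟨q', mul_left_cancel₀ (X_sub_C_ne_zero ρ) (by rw [hq]; ring), ?_⟩
    have hpos : 0 < (v - ρ) * (v - t) := mul_pos_of_neg_of_neg (by linarith) (by linarith)
    refine nonpos_of_mul_nonpos_left ?_ hpos
    simp only [eval_mul, eval_sub, eval_X, eval_C] at hsign
    linarith

theorem exists_isRoot_ge {t : ℝ} (hfg : OppositeSignsAtRoots ((X - C t) * f) g) (hf : f ≠ 0)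
    (hft : 0 ≤ f.eval t) (hg : 0 < g.leadingCoeff) (hdeg : 0 < g.natDegree) :
    ∃ ρ, t ≤ ρ ∧ g.IsRoot ρ ∧ (ρ = t ∨ ¬ f.IsRoot t ∧ g.eval t < 0) := by
  by_cases hgt : g.IsRoot t
  · exact ⟨t, le_rfl, hgt, .inl rfl⟩
  -- `g t ≠ 0` forces `t` to be a simple zero of `(X - t) * f`, and then the sign condition at `t`
  -- reads `g t * f t ≤ 0`.
  have hsimple : ¬ f.IsRoot t ∧ g.eval t < 0 := by
    obtain ⟨m, h, hfh, hht⟩ := exists_eq_pow_succ_mul_of_isRoot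
      (mul_ne_zero (X_sub_C_ne_zero t) hf) (by simp : ((X - C t) * f).IsRoot t)
    obtain ⟨q, hq, hsign⟩ := hfg t m h hfh hht
    obtain rfl : m = 0 := by
      by_contra hm
      exact hgt (by simp [hq, IsRoot, zero_pow hm])
    obtain rfl : h = f := mul_left_cancel₀ (X_sub_C_ne_zero t) (by rw [hfh, zero_add, pow_one])
    rw [pow_zero, one_mul] at hq
    subst hq
    exact ⟨hht, (nonpos_of_mul_nonpos_left hsign (hft.lt_of_ne' hht)).lt_of_ne hgt⟩
  have htend := tendsto_atTop_of_leadingCoeff_nonneg g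
    (natDegree_pos_iff_degree_pos.1 hdeg) hg.le
  obtain ⟨M, htM, hM⟩ := ((Filter.eventually_ge_atTop t).and (htend.eventually_ge_atTop 0)).exists
  obtain ⟨ρ, ⟨htρ, -⟩, hρ⟩ :=
    intermediate_value_Icc htM g.continuous.continuousOn ⟨hsimple.2.le, hM⟩
  exact ⟨ρ, htρ, hρ, .inr hsimple⟩

end OppositeSignsAtRoots

theorem oppositeSignsAtRoots_linear_mul_add_quadratic_mul_derivative {f : ℝ[X]} {a b c d : ℝ}
    (hc : c ≤ 0) (hd : 0 ≤ d) (hroots : ∀ v, f.IsRoot v → v ≤ 0) :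
    OppositeSignsAtRoots f
      ((C a * X + C b) * f + X * (C c * X + C d) * derivative f) := by
  intro v m h hf hv
  have hv0 : v ≤ 0 := hroots v (by simp [hf])
  refine ⟨(C a * X + C b) * (X - C v) * h +
      X * (C c * X + C d) * (C ((m : ℝ) + 1) * h + (X - C v) * derivative h), ?_, ?_⟩
  · rw [hf, derivative_mul, derivative_X_sub_C_pow]
    push_cast
    ring
  · have hcd : 0 ≤ c * v + d := by nlinarith
    simp only [eval_add, eval_mul, eval_sub, eval_X, eval_C, sub_self, zero_mul, mul_zero,
      add_zero, zero_add]
    have : 0 ≤ ((m : ℝ) + 1) * (c * v + d) * eval v h ^ 2 := by positivity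
    nlinarith

theorem exists_interleaved_of_oppositeSignsAtRoots {t : List ℝ} (ht : t.Pairwise (· ≥ ·))
    {g : ℝ[X]} (hdeg : g.natDegree = t.length + 1) (hg : 0 < g.leadingCoeff)
    (htg : OppositeSignsAtRoots (t.map (X - C ·)).prod g) :
    ∃ u, g = C g.leadingCoeff * (u.map (X - C ·)).prod ∧ Interleaved t u := by
  induction t generalizing g with
  | nil =>
    obtain ⟨a, ha, b, rfl⟩ := natDegree_eq_one.1 hdeg
    refine ⟨[-b / a], ?_, .single _⟩
    simp only [leadingCoeff_linear ha, List.map_cons, List.map_nil, List.prod_cons, List.prod_nil,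
      mul_one]
    rw [mul_sub, ← C_mul, mul_div_cancel₀ _ ha, C_neg, sub_neg_eq_add]
  | cons x t ih =>
    have htx : ∀ z ∈ t, z ≤ x := fun z hz => List.rel_of_pairwise_cons ht hz
    rw [List.map_cons, List.prod_cons] at htg
    have htprod : (t.map (X - C ·)).prod ≠ 0 := List.prod_ne_zero (by simp [X_sub_C_ne_zero])
    obtain ⟨ρ, hxρ, hρ, hcases⟩ :=
      htg.exists_isRoot_ge htprod (eval_prod_map_X_sub_C_nonneg htx) hg (by omega)
    obtain ⟨g₁, rfl⟩ := dvd_iff_isRoot.2 hρ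
    have hg₁ : g₁ ≠ 0 := by rintro rfl; simp at hg
    rw [natDegree_mul (X_sub_C_ne_zero ρ) hg₁, natDegree_X_sub_C, List.length_cons] at hdeg
    rw [leadingCoeff_mul, leadingCoeff_X_sub_C, one_mul] at hg ⊢
    obtain ⟨u, hu, hInt⟩ := ih ht.of_cons (by omega) hg
      (htg.of_X_sub_C_mul (fun v hv => htx v (isRoot_prod_map_X_sub_C_iff.1 hv)) hxρ
        fun hx => hcases.resolve_right fun h => h.1 hx)
    have hhead : ρ = x ∨ ∀ z ∈ u.head?, z ≤ x := by
      refine hcases.imp_right fun ⟨_, hneg⟩ z hz => le_of_not_gt fun hxz => hneg.not_ge ?_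
      obtain ⟨l, rfl⟩ : ∃ l, u = z :: l := ⟨u.tail, (List.cons_head?_tail hz).symm⟩
      have hl : 0 ≤ (l.map (X - C ·)).prod.eval x :=
        eval_prod_map_X_sub_C_nonneg (hInt.tail_le htx)
      rw [hu]
      simp only [List.map_cons, List.prod_cons, eval_mul, eval_sub, eval_X, eval_C]
      exact mul_nonneg_of_nonpos_of_nonpos (sub_nonpos.2 hxρ)
        (mul_nonpos_of_nonneg_of_nonpos hg.le
          (mul_nonpos_of_nonpos_of_nonneg (sub_nonpos.2 hxz.le) hl))
    obtain ⟨w, hw, hInt'⟩ := hInt.exists_perm_cons htx hxρ hhead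
    refine ⟨w, ?_, hInt'⟩
    rw [(hw.map _).prod_eq, List.map_cons, List.prod_cons]
    nth_rw 1 [hu]
    ring

theorem List.prod_map_eq_prod_univ_getD {ι M : Type*} [CommMonoid M] {l : List ι} {n : ℕ}
    (hl : l.length = n) (d : ι) (F : ι → M) :
    (l.map F).prod = ∏ i : Fin n, F (l.getD i d) := by
  subst hl
  rw [← Fin.prod_univ_fun_getElem]
  simp

theorem realRooted_C_mul_prod_X_sub_C {L : ℝ} (hL : L ≠ 0) (u : List ℝ) :
    RealRooted (C L * (u.map (X - C ·)).prod) := by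
  have hprod : (u.map (X - C ·)).prod = ((u : Multiset ℝ).map (X - C ·)).prod := by
    rw [Multiset.map_coe, Multiset.prod_coe]
  rw [RealRooted, hprod, roots_C_mul _ hL, roots_multiset_prod_X_sub_C, natDegree_C_mul hL,
    natDegree_multiset_prod_X_sub_C_eq_card]

theorem realRooted_and_interlaces_of_oppositeSignsAtRoots {f g : ℝ[X]} (hf : RealRooted f)
    (hf0 : 0 < f.leadingCoeff) (hg0 : 0 < g.leadingCoeff)
    (hdeg : g.natDegree = f.natDegree + 1) (hfg : OppositeSignsAtRoots f g) :
    RealRooted g ∧ Interlaces f g := by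
  set t := f.roots.sort (· ≥ ·)
  have htlen : t.length = f.natDegree := (Multiset.length_sort _).trans hf
  have hft : f = C f.leadingCoeff * (t.map (X - C ·)).prod := by
    conv_lhs => rw [← C_leadingCoeff_mul_prod_multiset_X_sub_C hf]
    rw [← Multiset.sort_eq f.roots (· ≥ ·), Multiset.map_coe, Multiset.prod_coe]
  rw [hft] at hfg
  obtain ⟨u, hu, hInt⟩ := exists_interleaved_of_oppositeSignsAtRoots
    (Multiset.pairwise_sort _ _) (by rw [hdeg, htlen]) hg0 (hfg.of_C_mul hf0)
  refine ⟨hu ▸ realRooted_C_mul_prod_X_sub_C hg0.ne' u, ⟨t.length, (u.getD · 0),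
    (t.getD · 0), ?_, ?_, fun i => (hInt.getD_le 0 i.isLt)⟩⟩
  · rwa [List.prod_map_eq_prod_univ_getD hInt.length_eq 0] at hu
  · rwa [List.prod_map_eq_prod_univ_getD rfl 0] at hft

theorem generalized_sturm_derivative (P : ℕ → Polynomial ℝ) (a b c d : ℕ → ℝ)
    (hnonneg : ∀ n i, 0 ≤ (P n).coeff i)
    (hdeg : ∀ n, 1 ≤ n → (P n).natDegree = (P (n - 1)).natDegree + 1)
    (hc : ∀ n, c n ≤ 0) (hd : ∀ n, 0 ≤ d n)
    (hrec : ∀ n, 1 ≤ n →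
      P n = (Polynomial.C (a n) * Polynomial.X + Polynomial.C (b n)) * P (n - 1) +
            Polynomial.X * (Polynomial.C (c n) * Polynomial.X + Polynomial.C (d n)) *
              Polynomial.derivative (P (n - 1)))
    (h0 : RealRooted (P 0)) :
    (∀ n, RealRooted (P n)) ∧ (∀ n, 1 ≤ n → Prec (P (n - 1)) (P n)) := by
  have hne : ∀ n, P n ≠ 0 := by
    intro n hn
    cases n with
    | zero => simpa [hn, hrec 1 le_rfl] using hdeg 1 le_rfl
    | succ n => simpa [hn] using hdeg (n + 1) n.succ_pos
  have hlc : ∀ n, 0 < (P n).leadingCoeff := fun n =>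
    (hnonneg n _).lt_of_ne' (leadingCoeff_ne_zero.2 (hne n))
  have hstep : ∀ n, 1 ≤ n → RealRooted (P (n - 1)) →
      RealRooted (P n) ∧ Interlaces (P (n - 1)) (P n) := fun n hn hreal =>
    realRooted_and_interlaces_of_oppositeSignsAtRoots hreal (hlc _) (hlc n) (hdeg n hn)
      (hrec n hn ▸ oppositeSignsAtRoots_linear_mul_add_quadratic_mul_derivative (hc n) (hd n)
        fun _ => nonpos_of_isRoot_of_coeff_nonneg (hnonneg _) (hne _))
  have hreal : ∀ n, RealRooted (P n) := by
    intro n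
    induction n with
    | zero => exact h0
    | succ n ih => exact (hstep (n + 1) n.succ_pos ih).1
  exact ⟨hreal, fun n hn => .inr (hstep n hn (hreal _)).2⟩
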